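/- In PowerSeries ℚ, let g = (1 - X^3)⁻¹, f1 = X*(1 - X^3)⁻¹, f2 = X*(1 + X^3), f3 = X*(1 + X^3)⁻¹, and let h be a power series supported on residue 1 mod 3 with h^3 = X^3*(1 - X^3)⁻¹ = f1*f2*f3. Let G = (1 + X^3)⁻¹, F1 = X*(1 + X^3)⁻¹, F2 = X*(1 + X^3)*(1 + 2*X^3)⁻¹, F3 = X*(1 + 2*X^3)*(1 + X^3)⁻¹. Then g * subst h G = 1 and fᵢ * subst h Fᵢ = X*h for i = 1,2,3; that is, (G, F1, F2, F3) is the inverse of (g, f1, f2, f3) in the triple Riordan group. -/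

import Mathlib

/-!
Substituting `h` is a ring endomorphism of `ℚ⟦X⟧`: it agrees with Mathlib's `PowerSeries.subst`.
Apart from factors `X ↦ h`, the series `G, F₁, F₂, F₃` are rational functions of `X³`, so only
`h³ = X³ / (1 - X³)` enters: `1 + X³ ↦ 1 / (1 - X³)` and `1 + 2X³ ↦ (1 + X³) / (1 - X³)`.
Each of the four identities is then a cancellation.
-/

open PowerSeries Finset

/-- Substitution of the power series `h` (with zero constant coefficient) into `F`. -/
noncomputable def subst (h F : PowerSeries ℚ) : PowerSeries ℚ :=
  PowerSeries.mk fun n => ∑ k ∈ range (n + 1), coeff k F * coeff n (h ^ k)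

theorem PowerSeries.coeff_pow_eq_zero_of_lt {R : Type*} [CommRing R] {h : R⟦X⟧}
    (hh : constantCoeff h = 0) {n k : ℕ} (hnk : n < k) : coeff n (h ^ k) = 0 :=
  coeff_of_lt_order _ <|
    (Nat.cast_lt.mpr hnk).trans_le (le_order_pow_of_constantCoeff_eq_zero k hh)

theorem PowerSeries.map_mul_map_inv {k S : Type*} [Field k] [Semiring S] (φ : k⟦X⟧ →+* S)
    {F : k⟦X⟧} (hF : constantCoeff F ≠ 0) : φ F * φ F⁻¹ = 1 := by
  rw [← map_mul, PowerSeries.mul_inv_cancel F hF, map_one]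

theorem subst_eq_powerSeries_subst {h : ℚ⟦X⟧} (hh : constantCoeff h = 0) (F : ℚ⟦X⟧) :
    _root_.subst h F = F.subst h := by
  ext n
  rw [coeff_subst' (HasSubst.of_constantCoeff_zero' hh), finsum_eq_sum_of_support_subset _
    (s := range (n + 1)) fun k hk => mem_coe.mpr <| mem_range.mpr <| not_le.mp fun hnk => hk ?_]
  · simp [_root_.subst]
  · simp [coeff_pow_eq_zero_of_lt hh (by omega : n < k)]

theorem example1_inverse_general
    (h : PowerSeries ℚ)
    (hh3 : h ^ 3 = X ^ 3 * ((1 : PowerSeries ℚ) - X ^ 3)⁻¹) :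
    ((1 - X ^ 3)⁻¹ : PowerSeries ℚ) * _root_.subst h ((1 + X ^ 3)⁻¹) = 1 ∧
      (X * (1 - X ^ 3)⁻¹ : PowerSeries ℚ) * _root_.subst h (X * (1 + X ^ 3)⁻¹) = X * h ∧
      (X * (1 + X ^ 3) : PowerSeries ℚ) *
          _root_.subst h (X * (1 + X ^ 3) * (1 + 2 * X ^ 3)⁻¹) = X * h ∧
      (X * (1 + X ^ 3)⁻¹ : PowerSeries ℚ) *
          _root_.subst h (X * (1 + 2 * X ^ 3) * (1 + X ^ 3)⁻¹) = X * h := by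
  have hc : constantCoeff h = 0 :=
    pow_eq_zero_iff three_ne_zero |>.mp (by simpa using congrArg constantCoeff hh3)
  have hs : HasSubst h := .of_constantCoeff_zero' hc
  let φ : ℚ⟦X⟧ →+* ℚ⟦X⟧ := substAlgHom (R := ℚ) hs
  have hφ (F : ℚ⟦X⟧) : _root_.subst h F = φ F := by
    simp [φ, coe_substAlgHom, subst_eq_powerSeries_subst hc]
  have hφX : φ X = h := by simp [φ, coe_substAlgHom, subst_X hs]
  set u : ℚ⟦X⟧ := 1 - X ^ 3 with hu
  set v : ℚ⟦X⟧ := 1 + X ^ 3 with hv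
  set w : ℚ⟦X⟧ := 1 + 2 * X ^ 3 with hw
  have hu_inv : u * u⁻¹ = 1 := PowerSeries.mul_inv_cancel u (by simp [hu])
  have hv_inv : v * v⁻¹ = 1 := PowerSeries.mul_inv_cancel v (by simp [hv])
  have hφv : φ v = u⁻¹ := by
    simp only [hv, map_add, map_one, map_pow, hφX, hh3]
    linear_combination (-1 : ℚ⟦X⟧) * hu_inv + u⁻¹ * hu
  have hφw : φ w = v * u⁻¹ := by
    simp only [hw, map_add, map_one, map_mul, map_pow, map_ofNat, hφX, hh3]
    linear_combination (-1 : ℚ⟦X⟧) * hu_inv + u⁻¹ * hu - u⁻¹ * hv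
  have hφv_inv : u⁻¹ * φ v⁻¹ = 1 := hφv ▸ map_mul_map_inv φ (by simp [hv])
  have hφw_inv : v * u⁻¹ * φ w⁻¹ = 1 := hφw ▸ map_mul_map_inv φ (by simp [hw])
  simp only [hφ, map_mul, hφX, hφv, hφw]
  refine ⟨hφv_inv, ?_, ?_, ?_⟩
  · linear_combination (X * h) * hφv_inv
  · linear_combination (X * h) * hφw_inv
  · linear_combination (X * h * v⁻¹ * v) * hφv_inv + (X * h) * hv_inv

theorem example1_inverse
    (h : PowerSeries ℚ)
    (hsupp : ∀ n : ℕ, n % 3 ≠ 1 → coeff n h = 0)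
    (hh3 : h ^ 3 = X ^ 3 * ((1 : PowerSeries ℚ) - X ^ 3)⁻¹) :
    ((1 - X ^ 3)⁻¹ : PowerSeries ℚ) * _root_.subst h ((1 + X ^ 3)⁻¹) = 1 ∧
      (X * (1 - X ^ 3)⁻¹ : PowerSeries ℚ) * _root_.subst h (X * (1 + X ^ 3)⁻¹) = X * h ∧
      (X * (1 + X ^ 3) : PowerSeries ℚ) *
          _root_.subst h (X * (1 + X ^ 3) * (1 + 2 * X ^ 3)⁻¹) = X * h ∧
      (X * (1 + X ^ 3)⁻¹ : PowerSeries ℚ) *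
          _root_.subst h (X * (1 + 2 * X ^ 3) * (1 + X ^ 3)⁻¹) = X * h :=
  example1_inverse_general h hh3
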